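/- Let (X_i, Y_i), i = 1,…,n, be i.i.d. random elements with X_i = (X_{i1},…,X_{ip}) ∈ ℝ^p and Y_i ∈ ℝ, and for each k = 1,…,p let ω_k = (1/(n(n−1))) Σ_{i≠l} I(X_{ik}<X_{lk}) I(Y_i<Y_l) − 1/4. Let M* ⊆ {1,…,p}, let κ ∈ (0,1/2) and c₂ > 0, and suppose min_{k∈M*} |E(ω_k)| > c₂ n^{−κ}. Let γₙ = c₅ n^{−κ} with 0 < c₅ ≤ c₂/2, and define the selected set M̂_{γₙ} = {1 ≤ k ≤ p : |ω_k| > γₙ}. Then there exists a constant c₄ > 0, depending only on c₅, such that for all n ≥ 2: P( M* ⊆ M̂_{γₙ} ) ≥ 1 − 2·|M*|·exp(−c₄ n^{1−2κ}). -/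

import Mathlib

/-!
`ω_k + 1/4` is a U-statistic of order two whose kernel takes values in `[0, 1]`. Following
Hoeffding, with `m = ⌊n/2⌋` the centred statistic `U - E U` is the average, over all permutations
`σ` of the sample, of the means of `m` centred kernel values on the disjoint pairs
`(σ j, σ (m + j))`. Each such mean involves independent bounded terms, so by Hoeffding's lemma it
is sub-Gaussian with variance proxy `1 / (4m)`; by convexity of `exp` so is their average. The
Chernoff bound then gives `P(|ω_k - E ω_k| ≥ t) ≤ 2 exp(-n t² / 2)`. For `k ∈ M*` and
`t = c₅ n^{-κ}` we have `|E ω_k| > 2t`, so `|ω_k| ≤ t` forces `|ω_k - E ω_k| ≥ t`, and a union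
bound over `M*` concludes with `c₄ = c₅² / 2`.
-/

open MeasureTheory ProbabilityTheory Finset Real
open scoped NNReal

theorem Finset.filter_ne_eq_offDiag {α : Type*} [Fintype α] [DecidableEq α] :
    univ.filter (fun q : α × α => q.1 ≠ q.2) = (univ : Finset α).offDiag := by
  ext
  simp

theorem Finset.cast_card_offDiag_univ {α : Type*} [Fintype α] [DecidableEq α] :
    (#(univ : Finset α).offDiag : ℝ) = Fintype.card α * (Fintype.card α - 1) := by
  rw [offDiag_card, card_univ, Nat.cast_sub (Nat.le_mul_self _)]
  push_cast
  ring

namespace Equiv.Perm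

variable {α : Type*} [Fintype α] [DecidableEq α]

theorem sum_apply_pair_eq_of_ne {M : Type*} [AddCommMonoid M] {a b a' b' : α} (hab : a ≠ b)
    (hab' : a' ≠ b') (f : α → α → M) :
    ∑ σ : Perm α, f (σ a) (σ b) = ∑ σ : Perm α, f (σ a') (σ b') := by
  obtain ⟨τ, hτ⟩ := exists_extending_pair ![a', b'] ![a, b]
    (by intro i j; fin_cases i <;> fin_cases j <;> simp [hab', hab'.symm])
    (by intro i j; fin_cases i <;> fin_cases j <;> simp [hab, hab.symm])
  have ha : τ a' = a := hτ 0
  have hb : τ b' = b := hτ 1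
  rw [← Equiv.sum_comp (Equiv.mulRight τ) fun σ => f (σ a') (σ b')]
  simp [ha, hb]

theorem card_offDiag_smul_sum_apply_pair {M : Type*} [AddCommMonoid M] {a b : α} (hab : a ≠ b)
    (f : α → α → M) :
    #(univ : Finset α).offDiag • ∑ σ : Perm α, f (σ a) (σ b) =
      Fintype.card (Perm α) • ∑ q ∈ (univ : Finset α).offDiag, f q.1 q.2 := by
  rw [← sum_const, ← card_univ, ← sum_const,
    sum_congr rfl fun q hq => sum_apply_pair_eq_of_ne hab (mem_offDiag.1 hq).2.2 f, sum_comm]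
  exact sum_congr rfl fun σ _ => sum_equiv (σ.prodCongr σ) (by simp) (by simp)

theorem average_offDiag_eq_average_pairs {κ : Type*} [Fintype κ] [Nonempty κ]
    (pair : κ ⊕ κ ↪ α) (f : α → α → ℝ) :
    (#(univ : Finset α).offDiag : ℝ)⁻¹ * ∑ q ∈ (univ : Finset α).offDiag, f q.1 q.2 =
      ∑ σ : Perm α, (Fintype.card (Perm α) : ℝ)⁻¹ *
        ((Fintype.card κ : ℝ)⁻¹ * ∑ j, f (σ (pair (.inl j))) (σ (pair (.inr j)))) := by
  have hpair (j : κ) : (Fintype.card (Perm α) : ℝ)⁻¹ *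
      ∑ σ : Perm α, f (σ (pair (.inl j))) (σ (pair (.inr j))) =
      (#(univ : Finset α).offDiag : ℝ)⁻¹ * ∑ q ∈ (univ : Finset α).offDiag, f q.1 q.2 := by
    have hne : pair (.inl j) ≠ pair (.inr j) := pair.injective.ne Sum.inl_ne_inr
    have hD : (#(univ : Finset α).offDiag : ℝ) ≠ 0 :=
      Nat.cast_ne_zero.2 (card_ne_zero_of_mem (a := (pair (.inl j), pair (.inr j))) (by simp [hne]))
    have := card_offDiag_smul_sum_apply_pair hne f
    simp only [nsmul_eq_mul] at this
    field_simp
    linarith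
  calc _ = (Fintype.card κ : ℝ)⁻¹ * ∑ _j : κ, (#(univ : Finset α).offDiag : ℝ)⁻¹ *
          ∑ q ∈ (univ : Finset α).offDiag, f q.1 q.2 := by
        rw [sum_const, card_univ, nsmul_eq_mul, ← mul_assoc, inv_mul_cancel₀ (by positivity),
          one_mul]
    _ = _ := by
        rw [sum_congr rfl fun j _ => (hpair j).symm]
        simp_rw [mul_sum]
        rw [sum_comm]
        exact sum_congr rfl fun σ _ => sum_congr rfl fun j _ => by ring

end Equiv.Perm

namespace ProbabilityTheory.HasSubgaussianMGF

variable {Ω E ι κ : Type*} [MeasurableSpace Ω] [MeasurableSpace E] {μ : Measure Ω} {c : ℝ≥0}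

theorem sum_mul_of_sum_eq_one {Y : ι → Ω → ℝ} {s : Finset ι} {w : ι → ℝ}
    (hw₀ : ∀ i ∈ s, 0 ≤ w i) (hw₁ : ∑ i ∈ s, w i = 1)
    (hY : ∀ i ∈ s, HasSubgaussianMGF (Y i) c μ) :
    HasSubgaussianMGF (fun ω => ∑ i ∈ s, w i * Y i ω) c μ := by
  have jensen (t ω) : exp (t * ∑ i ∈ s, w i * Y i ω) ≤ ∑ i ∈ s, w i * exp (t * Y i ω) := by
    have := convexOn_exp.map_sum_le hw₀ hw₁ (p := fun i => t * Y i ω) (by simp)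
    simpa [smul_eq_mul, mul_sum, mul_left_comm] using this
  have hint (t) : Integrable (fun ω => ∑ i ∈ s, w i * exp (t * Y i ω)) μ :=
    integrable_finsetSum _ fun i hi => ((hY i hi).integrable_exp_mul t).const_mul _
  have hint_exp (t) : Integrable (fun ω => exp (t * ∑ i ∈ s, w i * Y i ω)) μ := by
    refine (hint t).mono' ?_ (ae_of_all _ fun ω => ?_)
    · refine continuous_exp.comp_aestronglyMeasurable (AEStronglyMeasurable.const_mul ?_ t)
      exact aestronglyMeasurable_fun_sum _ fun i hi => (hY i hi).aestronglyMeasurable.const_mul _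
    · rw [norm_of_nonneg (exp_pos _).le]
      exact jensen t ω
  refine ⟨hint_exp, fun t => ?_⟩
  calc mgf (fun ω => ∑ i ∈ s, w i * Y i ω) μ t
      ≤ ∫ ω, ∑ i ∈ s, w i * exp (t * Y i ω) ∂μ := integral_mono (hint_exp t) (hint t) (jensen t)
    _ = ∑ i ∈ s, w i * mgf (Y i) μ t := by
        rw [integral_finsetSum _ fun i hi => ((hY i hi).integrable_exp_mul t).const_mul _]
        simp only [integral_const_mul, mgf]
    _ ≤ ∑ i ∈ s, w i * exp (c * t ^ 2 / 2) :=
        sum_le_sum fun i hi => mul_le_mul_of_nonneg_left ((hY i hi).mgf_le t) (hw₀ i hi)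
    _ = exp (c * t ^ 2 / 2) := by rw [← sum_mul, hw₁, one_mul]

theorem measureReal_abs_ge_le [IsFiniteMeasure μ] {X : Ω → ℝ} (h : HasSubgaussianMGF X c μ)
    {ε : ℝ} (hε : 0 ≤ ε) :
    μ.real {ω | ε ≤ |X ω|} ≤ 2 * exp (-ε ^ 2 / (2 * c)) := by
  have hsub : {ω | ε ≤ |X ω|} ⊆ {ω | ε ≤ X ω} ∪ {ω | ε ≤ (-X) ω} := fun ω (hω : ε ≤ |X ω|) =>
    (le_abs'.1 hω).elim (fun h => Or.inr (show ε ≤ -X ω by linarith)) Or.inl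
  calc μ.real {ω | ε ≤ |X ω|} ≤ μ.real {ω | ε ≤ X ω} + μ.real {ω | ε ≤ (-X) ω} :=
        (measureReal_mono hsub).trans (measureReal_union_le _ _)
    _ ≤ _ := by linarith [h.measure_ge_le hε, h.neg.measure_ge_le hε]

theorem sum_of_iIndepFun_pairs {Z : ι → Ω → E} (hZ : ∀ i, Measurable (Z i))
    (hindep : iIndepFun Z μ) (pair : κ ⊕ κ ↪ ι) {φ : κ → E × E → ℝ}
    (hφ : ∀ j, Measurable (φ j)) {c : κ → ℝ≥0} {s : Finset κ}
    (h : ∀ j ∈ s,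
      HasSubgaussianMGF (fun ω => φ j (Z (pair (.inl j)) ω, Z (pair (.inr j)) ω)) (c j) μ) :
    HasSubgaussianMGF (fun ω => ∑ j ∈ s, φ j (Z (pair (.inl j)) ω, Z (pair (.inr j)) ω))
      (∑ j ∈ s, c j) μ := by
  classical
  have := hindep.isProbabilityMeasure
  induction s using Finset.induction_on with
  | empty => simp
  | insert j₀ s hj₀ ih =>
    simp_rw [sum_insert hj₀]
    refine add_of_indepFun (h j₀ (mem_insert_self _ _))
      (ih fun j hj => h j (mem_insert_of_mem hj)) ?_
    set T : Finset ι := {pair (.inl j₀), pair (.inr j₀)}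
    set S : Finset ι := (s.disjSum s).map pair
    have hTS : Disjoint T S := by
      simp only [T, S, disjoint_insert_left, disjoint_singleton_left, mem_map, mem_disjSum,
        pair.injective.eq_iff, not_exists, not_and]
      grind
    have hT : pair (.inl j₀) ∈ T ∧ pair (.inr j₀) ∈ T := by simp [T]
    have hS (j) (hj : j ∈ s) : pair (.inl j) ∈ S ∧ pair (.inr j) ∈ S := by simp [S, hj]
    have key := (hindep.indepFun_finset T S hTS hZ).comp
      (φ := fun v => φ j₀ (v ⟨_, hT.1⟩, v ⟨_, hT.2⟩))
      (ψ := fun v => ∑ j ∈ s.attach, φ j (v ⟨_, (hS j j.2).1⟩, v ⟨_, (hS j j.2).2⟩))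
      (by fun_prop) (by fun_prop)
    convert key using 1
    · rfl
    funext ω
    exact (sum_attach s fun j => φ j (Z (pair (.inl j)) ω, Z (pair (.inr j)) ω)).symm

end ProbabilityTheory.HasSubgaussianMGF

section UStatistic

variable {Ω E : Type*} [MeasurableSpace Ω] [MeasurableSpace E] {P : Measure Ω}
  [IsProbabilityMeasure P] {n : ℕ} {Z : Fin n → Ω → E} {h : E × E → ℝ} {a b : ℝ}

noncomputable def uStatistic (h : E × E → ℝ) (Z : Fin n → Ω → E) (ω : Ω) : ℝ :=
  (1 / ((n : ℝ) * ((n : ℝ) - 1))) *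
    ∑ q ∈ (univ : Finset (Fin n × Fin n)).filter (fun q => q.1 ≠ q.2), h (Z q.1 ω, Z q.2 ω)

theorem integrable_comp_prodMk (hZ : ∀ i, Measurable (Z i)) (hh : Measurable h)
    (hab : ∀ z, h z ∈ Set.Icc a b) (i l : Fin n) : Integrable (fun ω => h (Z i ω, Z l ω)) P :=
  .of_mem_Icc a b (hh.comp ((hZ i).prodMk (hZ l))).aemeasurable (ae_of_all _ fun _ => hab _)

theorem integrable_uStatistic (hZ : ∀ i, Measurable (Z i)) (hh : Measurable h)
    (hab : ∀ z, h z ∈ Set.Icc a b) : Integrable (uStatistic h Z) P :=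
  (integrable_finsetSum _ fun q _ => integrable_comp_prodMk hZ hh hab q.1 q.2).const_mul _

theorem uStatistic_sub_integral (hZ : ∀ i, Measurable (Z i)) (hh : Measurable h)
    (hab : ∀ z, h z ∈ Set.Icc a b) (ω : Ω) :
    uStatistic h Z ω - P[uStatistic h Z] =
      (#(univ : Finset (Fin n)).offDiag : ℝ)⁻¹ * ∑ q ∈ (univ : Finset (Fin n)).offDiag,
        (h (Z q.1 ω, Z q.2 ω) - P[fun ω => h (Z q.1 ω, Z q.2 ω)]) := by
  simp only [uStatistic, sum_sub_distrib]
  rw [integral_const_mul, integral_finsetSum _ fun q _ => integrable_comp_prodMk hZ hh hab q.1 q.2,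
    filter_ne_eq_offDiag, cast_card_offDiag_univ, Fintype.card_fin]
  ring

theorem hasSubgaussianMGF_uStatistic_sub_integral (hn : 2 ≤ n) (hZ : ∀ i, Measurable (Z i))
    (hindep : iIndepFun Z P) (hh : Measurable h) (hab : ∀ z, h z ∈ Set.Icc a b) :
    HasSubgaussianMGF (fun ω => uStatistic h Z ω - P[uStatistic h Z])
      ((‖b - a‖₊ / 2) ^ 2 / (n / 2 : ℕ)) P := by
  set m := n / 2
  have hm : 0 < m := by omega
  have : Nonempty (Fin m) := ⟨⟨0, hm⟩⟩
  let pair : Fin m ⊕ Fin m ↪ Fin n :=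
    finSumFinEquiv.toEmbedding.trans (Fin.castLEEmb (by omega))
  set c : ℝ≥0 := (‖b - a‖₊ / 2) ^ 2
  let φ (i l : Fin n) (z : E × E) : ℝ := h z - P[fun ω => h (Z i ω, Z l ω)]
  have hφ (i l : Fin n) : HasSubgaussianMGF (fun ω => φ i l (Z i ω, Z l ω)) c P :=
    hasSubgaussianMGF_of_mem_Icc (hh.comp ((hZ i).prodMk (hZ l))).aemeasurable
      (ae_of_all _ fun _ => hab _)
  have hσ (σ : Equiv.Perm (Fin n)) : HasSubgaussianMGF (fun ω => (m : ℝ)⁻¹ *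
      ∑ j, φ (σ (pair (.inl j))) (σ (pair (.inr j)))
        (Z (σ (pair (.inl j))) ω, Z (σ (pair (.inr j))) ω)) (c / m) P := by
    have := (HasSubgaussianMGF.sum_of_iIndepFun_pairs hZ hindep (pair.trans σ.toEmbedding)
      (φ := fun j => φ (σ (pair (.inl j))) (σ (pair (.inr j)))) (fun j => hh.sub_const _)
      (s := univ) fun j _ => hφ _ _).const_mul (m : ℝ)⁻¹
    convert this using 1
    · rfl
    rw [sum_const, card_univ, Fintype.card_fin, nsmul_eq_mul]
    apply NNReal.eq
    change (c : ℝ) / m = (m : ℝ)⁻¹ ^ 2 * (m * c)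
    field_simp
  refine (HasSubgaussianMGF.sum_mul_of_sum_eq_one (s := univ)
    (w := fun _ => (Fintype.card (Equiv.Perm (Fin n)) : ℝ)⁻¹) (fun _ _ => by positivity)
    (by simp) fun σ _ => hσ σ).congr (ae_of_all _ fun ω => ?_)
  have := Equiv.Perm.average_offDiag_eq_average_pairs pair
    fun i l => h (Z i ω, Z l ω) - P[fun ω => h (Z i ω, Z l ω)]
  rw [Fintype.card_fin] at this
  beta_reduce
  rw [uStatistic_sub_integral hZ hh hab, this]

theorem measureReal_abs_sub_integral_ge_le_of_uStatistic (hn : 2 ≤ n)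
    (hZ : ∀ i, Measurable (Z i)) (hindep : iIndepFun Z P) (hh : Measurable h)
    (h01 : ∀ z, h z ∈ Set.Icc 0 1) {V : Ω → ℝ} {d : ℝ} (hV : ∀ ω, V ω = uStatistic h Z ω - d)
    {t : ℝ} (ht : 0 ≤ t) :
    P.real {ω | t ≤ |V ω - ∫ ω', V ω' ∂P|} ≤ 2 * exp (-(n * t ^ 2 / 2)) := by
  have hVU : ∀ ω, V ω - ∫ ω', V ω' ∂P = uStatistic h Z ω - P[uStatistic h Z] := fun ω => by
    rw [funext hV, integral_sub (integrable_uStatistic hZ hh h01) (integrable_const _)]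
    simp
  simp only [hVU]
  refine ((hasSubgaussianMGF_uStatistic_sub_integral hn hZ hindep hh h01).measureReal_abs_ge_le
    ht).trans ?_
  have hm : (0 : ℝ) < (n / 2 : ℕ) := by norm_cast; omega
  have hnm : (n : ℝ) ≤ 4 * (n / 2 : ℕ) := by norm_cast; omega
  have hc : -t ^ 2 / (2 * ((1 / 2) ^ 2 / (n / 2 : ℕ))) = -(2 * (n / 2 : ℕ) * t ^ 2 : ℝ) := by
    field_simp
  gcongr
  simp only [NNReal.coe_div, NNReal.coe_pow, coe_nnnorm, sub_zero, norm_one, NNReal.coe_ofNat,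
    NNReal.coe_natCast, hc]
  nlinarith [sq_nonneg t]

end UStatistic

theorem one_sub_card_mul_le_measureReal {Ω ι : Type*} [MeasurableSpace Ω] {P : Measure Ω}
    [IsProbabilityMeasure P] {s : Finset ι} {A : Set Ω} {B : ι → Set Ω} {δ : ℝ}
    (hA : Aᶜ ⊆ ⋃ i ∈ s, B i) (hB : ∀ i ∈ s, P.real (B i) ≤ δ) : 1 - #s * δ ≤ P.real A := by
  have h1 : 1 ≤ P.real A + P.real Aᶜ := by
    simpa [probReal_univ] using measureReal_union_le (μ := P) A Aᶜ
  have h2 : ∑ i ∈ s, P.real (B i) ≤ #s * δ := by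
    simpa using sum_le_sum hB
  linarith [(measureReal_mono hA (measure_ne_top P _)).trans (measureReal_biUnion_finset_le s B)]

theorem compl_setOf_forall_lt_abs_subset {Ω ι : Type*} {s : Finset ι} {V : ι → Ω → ℝ}
    {e : ι → ℝ} {t : ℝ} (he : ∀ i ∈ s, 2 * t < |e i|) :
    {ω | ∀ i ∈ s, t < |V i ω|}ᶜ ⊆ ⋃ i ∈ s, {ω | t ≤ |V i ω - e i|} := by
  intro ω hω
  simp only [Set.mem_compl_iff, Set.mem_ofPred_eq, not_forall, not_lt] at hω
  obtain ⟨i, hi, hVi⟩ := hω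
  refine Set.mem_biUnion hi (show t ≤ |V i ω - e i| from ?_)
  linarith [he i hi, abs_sub_abs_le_abs_sub (e i) (V i ω), abs_sub_comm (V i ω) (e i)]

section Concordance

variable {p : ℕ}

noncomputable def concordanceKernel (k : Fin p)
    (z : ((Fin p → ℝ) × ℝ) × ((Fin p → ℝ) × ℝ)) : ℝ :=
  (if z.1.1 k < z.2.1 k then 1 else 0) * (if z.1.2 < z.2.2 then 1 else 0)

theorem measurable_concordanceKernel (k : Fin p) : Measurable (concordanceKernel k) := by
  unfold concordanceKernel
  refine Measurable.mul ?_ ?_ <;>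
    exact Measurable.ite (measurableSet_lt (by fun_prop) (by fun_prop)) measurable_const
      measurable_const

theorem concordanceKernel_mem_Icc (k : Fin p) (z) : concordanceKernel k z ∈ Set.Icc 0 1 := by
  unfold concordanceKernel
  constructor <;> split_ifs <;> norm_num

end Concordance

/-- **Sure screening property of robust rank correlation screening:** if
`min_{k∈M*} |E ω_k| > c₂ n^{-κ}` and `γₙ = c₅ n^{-κ}` with `0 < c₅ ≤ c₂/2`, then there is a
constant `c₄ > 0` depending only on `c₅` such that for all `n ≥ 2`,
`P(M* ⊆ M̂_{γₙ}) ≥ 1 - 2 |M*| exp(-c₄ n^{1-2κ})`, where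
`M̂_{γₙ} = {k : |ω_k| > γₙ}`. -/
theorem sure_screening_of_rank_correlation :
    ∀ κ ∈ Set.Ioo (0 : ℝ) (1 / 2), ∀ c₂ > (0 : ℝ), ∀ c₅ : ℝ, 0 < c₅ → c₅ ≤ c₂ / 2 →
      ∃ c₄ > (0 : ℝ),
        ∀ n : ℕ, 2 ≤ n → ∀ p : ℕ,
          ∀ (Ω : Type) (_ : MeasurableSpace Ω) (P : Measure Ω),
            IsProbabilityMeasure P →
          ∀ (X : Fin n → Ω → (Fin p → ℝ)) (Y : Fin n → Ω → ℝ),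
            (∀ i, Measurable (X i)) → (∀ i, Measurable (Y i)) →
            iIndepFun (fun i ω => (X i ω, Y i ω)) P →
            (∀ i l, P.map (fun ω => (X i ω, Y i ω)) = P.map (fun ω => (X l ω, Y l ω))) →
          ∀ W : Fin p → Ω → ℝ,
            (∀ k a, W k a = (1 / ((n : ℝ) * ((n : ℝ) - 1))) *
                ∑ q ∈ (Finset.univ : Finset (Fin n × Fin n)).filter (fun q => q.1 ≠ q.2),
                  (if X q.1 a k < X q.2 a k then (1 : ℝ) else 0) *
                    (if Y q.1 a < Y q.2 a then (1 : ℝ) else 0)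
              - 1 / 4) →
          ∀ Mstar : Finset (Fin p),
            (∀ k ∈ Mstar, c₂ * (n : ℝ) ^ (-κ) < |∫ a, W k a ∂P|) →
            1 - 2 * (Mstar.card : ℝ) * Real.exp (-c₄ * (n : ℝ) ^ (1 - 2 * κ))
              ≤ (P {a | ∀ k ∈ Mstar, c₅ * (n : ℝ) ^ (-κ) < |W k a|}).toReal := by
  intro κ _ c₂ _ c₅ hc₅ hc₅c₂
  refine ⟨c₅ ^ 2 / 2, by positivity, ?_⟩
  intro n hn p Ω _ P _ X Y hX hY hindep _ W hW M hM
  set t := c₅ * (n : ℝ) ^ (-κ)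
  have hn₀ : (0 : ℝ) < n := by positivity
  have hZ (i : Fin n) : Measurable fun ω => (X i ω, Y i ω) := (hX i).prodMk (hY i)
  have hexponent : -(n * t ^ 2 / 2) = -(c₅ ^ 2 / 2) * (n : ℝ) ^ (1 - 2 * κ) := by
    rw [show 1 - 2 * κ = 1 + -κ + -κ by ring, Real.rpow_add hn₀, Real.rpow_add hn₀, Real.rpow_one]
    ring
  have hmean (k) (hk : k ∈ M) : 2 * t < |∫ a, W k a ∂P| := by
    have := Real.rpow_pos_of_pos hn₀ (-κ)
    nlinarith [hM k hk]
  rw [mul_comm 2 (M.card : ℝ), mul_assoc, ← hexponent, ← measureReal_def]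
  refine one_sub_card_mul_le_measureReal (P := P) (compl_setOf_forall_lt_abs_subset hmean) fun k _ => ?_
  exact measureReal_abs_sub_integral_ge_le_of_uStatistic hn hZ hindep
    (measurable_concordanceKernel k) (concordanceKernel_mem_Icc k) (hW k) (by positivity)
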